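/- Let ε be a real-valued random variable with density f with respect to Lebesgue measure and cumulative distribution function F, and suppose F(0) = α ∈ (0,1). Suppose there are constants C > 0 and δ > 0 such that |f(e) − f(0)| ≤ C|e| for all |e| ≤ δ. Then for all real numbers r, s with |r| ≤ δ and |s| ≤ δ: | E[ τ_α(ε − s) − τ_α(ε − r) − (s − r)(1{ε ≤ r} − α) ] − ½ f(0)(s − r)² | ≤ (C/2) · max(|r|, |s|) · (s − r)². -/

import Mathlib

/-! Knight's identity writes the integrand, for each outcome `e` of `ε`, as
`∫_r^s (1{e ≤ x} − 1{e ≤ r}) dx`. By Fubini its expectation is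
`∫_r^s (F x − F r) dx = ∫_r^s ∫_r^x f`, which equals `½ f(0) (s − r)²` when `f` is replaced
by `f 0`. Between `r` and `s` we have `|f u − f 0| ≤ C max(|r|, |s|)`, so the error is at most
`C max(|r|, |s|) |∫_r^s |x − r| dx| = C max(|r|, |s|) (s − r)² / 2`. -/

open MeasureTheory

/-- The check function `τ_α(u) = u (α − 1{u < 0})`. -/
noncomputable def checkFn (α u : ℝ) : ℝ := u * (α - if u < 0 then 1 else 0)

open Set intervalIntegral

lemma checkFn_eq_mul_add_max (α u : ℝ) : checkFn α u = α * u + max (-u) 0 := by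
  unfold checkFn
  split_ifs with h
  · rw [max_eq_left (by linarith)]; ring
  · rw [max_eq_right (by linarith)]; ring

lemma monotone_ite_le (e : ℝ) : Monotone fun x : ℝ => if e ≤ x then (1 : ℝ) else 0 := by
  intro x y hxy
  dsimp only
  split_ifs <;> linarith

lemma hasDerivWithinAt_max_sub_zero_Ioi (e t : ℝ) :
    HasDerivWithinAt (fun x => max (x - e) 0) (if e ≤ t then 1 else 0) (Ioi t) t := by
  split_ifs with h
  · refine ((hasDerivAt_id' t).sub_const e).hasDerivWithinAt.congr (fun x hx => ?_) ?_
    · exact max_eq_left (by linarith [mem_Ioi.mp hx])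
    · exact max_eq_left (by linarith)
  · refine (hasDerivAt_const t (0 : ℝ)).hasDerivWithinAt.congr_of_eventuallyEq ?_ ?_
    · filter_upwards [self_mem_nhdsWithin, nhdsWithin_le_nhds (Iio_mem_nhds (not_le.mp h))]
        with x _ hx
      exact max_eq_right (by linarith [mem_Iio.mp hx])
    · exact max_eq_right (by linarith [not_le.mp h])

lemma integral_ite_le (e a b : ℝ) :
    ∫ x in a..b, (if e ≤ x then (1 : ℝ) else 0) = max (b - e) 0 - max (a - e) 0 :=
  integral_eq_sub_of_hasDeriv_right (by fun_prop)
    (fun t _ => hasDerivWithinAt_max_sub_zero_Ioi e t) (monotone_ite_le e).intervalIntegrable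

/-- Knight's identity. -/
lemma checkFn_sub_sub_eq_integral (α e r s : ℝ) :
    checkFn α (e - s) - checkFn α (e - r) - (s - r) * ((if e ≤ r then (1 : ℝ) else 0) - α)
      = ∫ x in r..s, ((if e ≤ x then (1 : ℝ) else 0) - if e ≤ r then 1 else 0) := by
  rw [integral_sub (monotone_ite_le e).intervalIntegrable intervalIntegrable_const,
    integral_ite_le, intervalIntegral.integral_const, smul_eq_mul, checkFn_eq_mul_add_max,
    checkFn_eq_mul_add_max, neg_sub, neg_sub]
  ring

lemma integral_intervalIntegral_ite_le_sub {Ω : Type*} [MeasurableSpace Ω]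
    (P : Measure Ω) [IsFiniteMeasure P] {ε : Ω → ℝ} (hε : Measurable ε) (r s : ℝ) :
    ∫ ω, (∫ x in r..s, ((if ε ω ≤ x then (1 : ℝ) else 0) - if ε ω ≤ r then 1 else 0)) ∂P
      = ∫ x in r..s, (P.real (ε ⁻¹' Iic x) - P.real (ε ⁻¹' Iic r)) := by
  have hind : ∀ x,
      (fun ω => if ε ω ≤ x then (1 : ℝ) else 0) = (ε ⁻¹' Iic x).indicator 1 := by
    intro x; ext ω; simp [indicator]
  have hint : ∀ x, Integrable (fun ω => if ε ω ≤ x then (1 : ℝ) else 0) P := by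
    intro x; rw [hind]; exact (integrable_const 1).indicator (hε measurableSet_Iic)
  have : IsFiniteMeasure (volume.restrict (uIoc r s)) := Real.isFiniteMeasure_restrict_Ioc _ _
  have hmeas : Measurable fun p : ℝ × Ω =>
      (if ε p.2 ≤ p.1 then (1 : ℝ) else 0) - if ε p.2 ≤ r then 1 else 0 := by
    refine (Measurable.ite ?_ measurable_const measurable_const).sub
      (Measurable.ite ?_ measurable_const measurable_const)
    · exact measurableSet_le (hε.comp measurable_snd) measurable_fst
    · exact measurableSet_le (hε.comp measurable_snd) measurable_const
  rw [← intervalIntegral_integral_swap]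
  · refine integral_congr (fun x _ => ?_)
    rw [integral_sub (hint x) (hint r), hind, hind, integral_indicator_one (hε measurableSet_Iic),
      integral_indicator_one (hε measurableSet_Iic)]
  · refine Integrable.of_bound hmeas.aestronglyMeasurable 1 (ae_of_all _ fun p => ?_)
    simp only [Function.uncurry]
    split_ifs <;> norm_num

lemma measureReal_preimage_Iic_sub_eq_integral {Ω : Type*} [MeasurableSpace Ω]
    {P : Measure Ω} {ε : Ω → ℝ} {f : ℝ → ℝ}
    (hf : ∀ s, MeasurableSet s → P.real (ε ⁻¹' s) = ∫ x in s, f x) (hfi : Integrable f)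
    (a b : ℝ) :
    P.real (ε ⁻¹' Iic b) - P.real (ε ⁻¹' Iic a) = ∫ x in a..b, f x := by
  rw [hf _ measurableSet_Iic, hf _ measurableSet_Iic,
    integral_Iic_sub_Iic hfi.integrableOn hfi.integrableOn]

lemma integral_sub_left_eq (a b : ℝ) : ∫ x in a..b, (x - a) = (b - a) ^ 2 / 2 := by
  rw [integral_sub intervalIntegral.intervalIntegrable_id intervalIntegrable_const,
    integral_id, intervalIntegral.integral_const, smul_eq_mul]
  ring

lemma abs_integral_abs_sub_left (a b : ℝ) : |∫ x in a..b, (|x - a|)| = (b - a) ^ 2 / 2 := by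
  rcases le_total a b with hab | hba
  · rw [integral_congr (g := fun x => x - a) fun x hx => abs_of_nonneg ?_, integral_sub_left_eq,
      abs_of_nonneg (by positivity)]
    rw [uIcc_of_le hab] at hx; linarith [hx.1]
  · rw [integral_congr (g := fun x => -(x - a)) fun x hx => abs_of_nonpos ?_,
      intervalIntegral.integral_neg, integral_sub_left_eq, abs_neg, abs_of_nonneg (by positivity)]
    rw [uIcc_of_ge hba] at hx; linarith [hx.2]

lemma abs_integral_primitive_sub_le {g : ℝ → ℝ} (hg : LocallyIntegrable g) {a b c K : ℝ}
    (hK : ∀ u ∈ uIcc a b, |g u - c| ≤ K) :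
    |(∫ x in a..b, ∫ u in a..x, g u) - c * (b - a) ^ 2 / 2| ≤ K * (b - a) ^ 2 / 2 := by
  have hgi : ∀ x y, IntervalIntegrable g volume x y := fun x y =>
    (hg.integrableOn_isCompact isCompact_uIcc).intervalIntegrable
  have hK0 : 0 ≤ K := (abs_nonneg _).trans (hK a left_mem_uIcc)
  have hcenter : (∫ x in a..b, ∫ u in a..x, g u) - c * (b - a) ^ 2 / 2
      = ∫ x in a..b, ∫ u in a..x, (g u - c) := by
    have hlin : ∀ x, ∫ u in a..x, (g u - c) = (∫ u in a..x, g u) - c * (x - a) := fun x => by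
      rw [integral_sub (hgi a x) intervalIntegrable_const, intervalIntegral.integral_const,
        smul_eq_mul, mul_comm]
    simp_rw [hlin]
    rw [integral_sub ((continuous_primitive hgi a).intervalIntegrable _ _)
      ((by fun_prop : Continuous fun x => c * (x - a)).intervalIntegrable _ _),
      intervalIntegral.integral_const_mul, integral_sub_left_eq]
    ring
  have hinner : ∀ x ∈ uIoc a b, ‖∫ u in a..x, (g u - c)‖ ≤ K * |x - a| := fun x hx =>
    norm_integral_le_of_norm_le_const fun u hu =>
      hK u (uIcc_subset_uIcc_left (uIoc_subset_uIcc hx) (uIoc_subset_uIcc hu))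
  calc |(∫ x in a..b, ∫ u in a..x, g u) - c * (b - a) ^ 2 / 2|
      = ‖∫ x in a..b, ∫ u in a..x, (g u - c)‖ := by rw [hcenter, Real.norm_eq_abs]
    _ ≤ |∫ x in a..b, K * (|x - a|)| :=
      norm_integral_le_abs_of_norm_le ((ae_restrict_mem measurableSet_uIoc).mono hinner)
        ((by fun_prop : Continuous fun x => K * (|x - a|)).intervalIntegrable _ _)
    _ = K * (b - a) ^ 2 / 2 := by
      rw [intervalIntegral.integral_const_mul, abs_mul, abs_of_nonneg hK0,
        abs_integral_abs_sub_left]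
      ring

lemma abs_le_max_abs_abs_of_mem_uIcc {a b u : ℝ} (hu : u ∈ uIcc a b) : |u| ≤ max |a| |b| := by
  rcases mem_uIcc.mp hu with ⟨hau, hub⟩ | ⟨hbu, hua⟩
  · exact abs_le_max_abs_abs hau hub
  · exact max_comm |b| |a| ▸ abs_le_max_abs_abs hbu hua

theorem expected_check_loss_quadratic_expansion_general
    {Ω : Type*} [MeasurableSpace Ω] (P : Measure Ω) [IsProbabilityMeasure P]
    (ε : Ω → ℝ) (hε : Measurable ε)
    (f : ℝ → ℝ)
    (hf : ∀ s : Set ℝ, MeasurableSet s → (P (ε ⁻¹' s)).toReal = ∫ x in s, f x)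
    (α : ℝ)
    (C δ : ℝ) (hC : 0 < C)
    (hLip : ∀ e : ℝ, |e| ≤ δ → |f e - f 0| ≤ C * |e|)
    (r s : ℝ) (hr : |r| ≤ δ) (hs : |s| ≤ δ) :
    |(∫ ω, (checkFn α (ε ω - s) - checkFn α (ε ω - r)
        - (s - r) * ((if ε ω ≤ r then (1 : ℝ) else 0) - α)) ∂P)
      - (1 / 2) * f 0 * (s - r) ^ 2|
      ≤ C / 2 * max |r| |s| * (s - r) ^ 2 := by
  have hfi : Integrable f :=
    .of_integral_ne_zero (by rw [← setIntegral_univ, ← hf univ MeasurableSet.univ]; simp)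
  have hf_near : ∀ u ∈ uIcc r s, |f u - f 0| ≤ C * max |r| |s| := fun u hu =>
    have hu_le := abs_le_max_abs_abs_of_mem_uIcc hu
    (hLip u (hu_le.trans (max_le hr hs))).trans (mul_le_mul_of_nonneg_left hu_le hC.le)
  have hexpect : ∫ ω, (checkFn α (ε ω - s) - checkFn α (ε ω - r)
      - (s - r) * ((if ε ω ≤ r then (1 : ℝ) else 0) - α)) ∂P
      = ∫ x in r..s, ∫ u in r..x, f u := by
    simp_rw [checkFn_sub_sub_eq_integral, integral_intervalIntegral_ite_le_sub P hε,
      measureReal_preimage_Iic_sub_eq_integral hf hfi]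
  rw [hexpect]
  convert abs_integral_primitive_sub_le hfi.locallyIntegrable hf_near using 2 <;> ring

/-- Quadratic (Bahadur-type) expansion of the expected check loss: if `ε` has density `f`
with cdf `F`, `F(0) = α ∈ (0,1)`, and `|f(e) − f(0)| ≤ C|e|` for `|e| ≤ δ`, then for
`|r|, |s| ≤ δ`,
`| E[τ_α(ε−s) − τ_α(ε−r) − (s−r)(1{ε ≤ r} − α)] − ½ f(0)(s−r)² | ≤ (C/2) max(|r|,|s|) (s−r)²`. -/
theorem expected_check_loss_quadratic_expansion
    {Ω : Type*} [MeasurableSpace Ω] (P : Measure Ω) [IsProbabilityMeasure P]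
    (ε : Ω → ℝ) (hε : Measurable ε)
    (f : ℝ → ℝ)
    (hf : ∀ s : Set ℝ, MeasurableSet s → (P (ε ⁻¹' s)).toReal = ∫ x in s, f x)
    (F : ℝ → ℝ) (hF : ∀ t, F t = (P {ω | ε ω ≤ t}).toReal)
    (α : ℝ) (hα : α ∈ Set.Ioo (0 : ℝ) 1) (hF0 : F 0 = α)
    (C δ : ℝ) (hC : 0 < C) (hδ : 0 < δ)
    (hLip : ∀ e : ℝ, |e| ≤ δ → |f e - f 0| ≤ C * |e|)
    (r s : ℝ) (hr : |r| ≤ δ) (hs : |s| ≤ δ) :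
    |(∫ ω, (checkFn α (ε ω - s) - checkFn α (ε ω - r)
        - (s - r) * ((if ε ω ≤ r then (1 : ℝ) else 0) - α)) ∂P)
      - (1 / 2) * f 0 * (s - r) ^ 2|
      ≤ C / 2 * max |r| |s| * (s - r) ^ 2 :=
  expected_check_loss_quadratic_expansion_general P ε hε f hf α C δ hC hLip r s hr hs
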